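/- arXiv:2302.05627 — 2 statements merged into one kernel-verified Lean document; each statement's English description precedes it below -/
import Mathlib

section
/- Let (Ω, μ) be a measure space and P : L²(μ) → L²(μ) the positive-part (Nemytskii max) operator, P(v) := v⁺ = sup(v, 0) taken pointwise a.e. Then P is directionally differentiable: for all z, h ∈ L²(μ), the quotients (P(z + τh) − P(z))/τ converge in the L²(μ)-norm, as τ ↓ 0, to the element D(z;h) of L²(μ) defined a.e. by D(z;h)(x) = h(x) where z(x) > 0, D(z;h)(x) = max(h(x), 0) where z(x) = 0, and D(z;h)(x) = 0 where z(x) < 0. -/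
/-!
Since `max · 0` is 1-Lipschitz, the pointwise difference quotient
`τ⁻¹ (max (z x + τ h x) 0 - max (z x) 0)` is bounded by `|h x|` for every `τ`; and for all
small `τ > 0` it already equals `D(z;h)(x)`, according to the sign of `z x`. Dominated
convergence, applied to `|quotient - D|^2 ≤ (2 |h|)^2`, turns this into `L²` convergence.
-/

open MeasureTheory Filter Set Topology
open scoped ENNReal

noncomputable def posPartDirDeriv (a b : ℝ) : ℝ :=
  if 0 < a then b else if a = 0 then max b 0 else 0

theorem abs_posPartDirDeriv_le (a b : ℝ) : |posPartDirDeriv a b| ≤ |b| := by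
  unfold posPartDirDeriv
  split_ifs
  · rfl
  · exact abs_max_le_max_abs_abs.trans (by simp)
  · simp

theorem abs_posPart_slope_le (a b τ : ℝ) :
    |τ⁻¹ * (max (a + τ * b) 0 - max a 0)| ≤ |b| := by
  rcases eq_or_ne τ 0 with rfl | hτ
  · simp
  calc |τ⁻¹ * (max (a + τ * b) 0 - max a 0)| ≤ |τ|⁻¹ * |τ * b| := by
        rw [abs_mul, abs_inv]
        refine mul_le_mul_of_nonneg_left ?_ (by positivity)
        simpa only [add_sub_cancel_left] using abs_max_sub_max_le_abs (a + τ * b) a 0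
    _ = |b| := by rw [abs_mul, inv_mul_cancel_left₀ (abs_ne_zero.mpr hτ)]

theorem tendsto_posPart_slope (a b : ℝ) :
    Tendsto (fun τ => τ⁻¹ * (max (a + τ * b) 0 - max a 0)) (𝓝[>] 0)
      (𝓝 (posPartDirDeriv a b)) := by
  have hline : Tendsto (fun τ : ℝ => a + τ * b) (𝓝[>] 0) (𝓝 a) := by
    have : Continuous fun τ : ℝ => a + τ * b := by fun_prop
    simpa using (this.tendsto 0).mono_left nhdsWithin_le_nhds
  unfold posPartDirDeriv
  refine tendsto_const_nhds.congr' ?_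
  rcases lt_trichotomy a 0 with ha | rfl | ha
  · filter_upwards [hline.eventually (eventually_lt_nhds ha)] with τ hτ
    simp [ha.not_gt, ha.ne, max_eq_right hτ.le, max_eq_right ha.le]
  · filter_upwards [self_mem_nhdsWithin] with τ (hτ : 0 < τ)
    simp only [lt_irrefl, if_false, if_true, zero_add, max_self, sub_zero]
    rw [eq_comm, inv_mul_eq_iff_eq_mul₀ hτ.ne', mul_max_of_nonneg _ _ hτ.le, mul_zero]
  · filter_upwards [hline.eventually (eventually_gt_nhds ha), self_mem_nhdsWithin]
      with τ hτ (hτ0 : 0 < τ)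
    simp [ha, max_eq_left hτ.le, max_eq_left ha.le, hτ0.ne']

theorem measurable_posPartDirDeriv : Measurable (Function.uncurry posPartDirDeriv) := by
  unfold posPartDirDeriv
  refine Measurable.ite (measurableSet_lt measurable_const measurable_fst) measurable_snd
    (Measurable.ite (measurable_fst (measurableSet_singleton 0))
      (measurable_snd.max measurable_const) measurable_const)

section

variable {α : Type*} [MeasurableSpace α] {μ : Measure α}

theorem memLp_posPartDirDeriv {p : ℝ≥0∞} {f g : α → ℝ} (hf : AEStronglyMeasurable f μ)
    (hg : MemLp g p μ) : MemLp (fun x => posPartDirDeriv (f x) (g x)) p μ :=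
  hg.of_le (measurable_posPartDirDeriv.comp_aemeasurable
      (hf.aemeasurable.prodMk hg.1.aemeasurable)).aestronglyMeasurable
    (ae_of_all _ fun x => abs_posPartDirDeriv_le (f x) (g x))

theorem coeFn_posPart_slope {p : ℝ≥0∞} [Fact (1 ≤ p)] (z h : Lp ℝ p μ) (τ : ℝ) :
    ⇑(τ⁻¹ • ((z + τ • h) ⊔ 0 - z ⊔ 0)) =ᵐ[μ]
      fun x => τ⁻¹ * (max (z x + τ * h x) 0 - max (z x) 0) := by
  filter_upwards [Lp.coeFn_smul τ⁻¹ ((z + τ • h) ⊔ 0 - z ⊔ 0),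
    Lp.coeFn_sub ((z + τ • h) ⊔ 0) (z ⊔ 0), Lp.coeFn_sup (z + τ • h) 0, Lp.coeFn_sup z 0,
    Lp.coeFn_add z (τ • h), Lp.coeFn_smul τ h, Lp.coeFn_zero ℝ p μ]
    with x h1 h2 h3 h4 h5 h6 h7
  simp only [h1, h2, h3, h4, h5, h6, h7, Pi.smul_apply, Pi.sub_apply, Pi.sup_apply,
    Pi.add_apply, Pi.zero_apply, smul_eq_mul]

theorem tendsto_eLpNorm_sub_of_dominated {E ι : Type*} [NormedAddCommGroup E] {l : Filter ι}
    [l.IsCountablyGenerated] {p : ℝ≥0∞} (hp : p ≠ ∞) {F : ι → α → E} {f : α → E} {g : α → ℝ}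
    (hF_meas : ∀ᶠ i in l, AEStronglyMeasurable (F i) μ) (hf_meas : AEStronglyMeasurable f μ)
    (hg : MemLp g p μ) (h_bound : ∀ᶠ i in l, ∀ᵐ x ∂μ, ‖F i x‖ ≤ g x)
    (hf_bound : ∀ᵐ x ∂μ, ‖f x‖ ≤ g x)
    (h_lim : ∀ᵐ x ∂μ, Tendsto (fun i => F i x) l (𝓝 (f x))) :
    Tendsto (fun i => eLpNorm (F i - f) p μ) l (𝓝 0) := by
  rcases eq_or_ne p 0 with rfl | hp0
  · simpa using tendsto_const_nhds
  have hq : 0 < p.toReal := ENNReal.toReal_pos hp0 hp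
  have h_int : Tendsto (fun i => ∫⁻ x, ‖F i x - f x‖ₑ ^ p.toReal ∂μ) l (𝓝 0) := by
    have h_fin : ∫⁻ x, ‖2 * g x‖ₑ ^ p.toReal ∂μ ≠ ∞ :=
      (lintegral_rpow_enorm_lt_top_of_eLpNorm_lt_top hp0 hp
        (hg.const_mul 2).eLpNorm_lt_top).ne
    have h_lim' : ∀ᵐ x ∂μ, Tendsto (fun i => ‖F i x - f x‖ₑ ^ p.toReal) l (𝓝 0) := by
      filter_upwards [h_lim] with x hx
      simpa [Function.comp_def, ENNReal.zero_rpow_of_pos hq] using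
        (((ENNReal.continuous_rpow_const (y := p.toReal)).comp continuous_enorm).tendsto 0).comp
          (tendsto_sub_nhds_zero_iff.mpr hx)
    have h_dom : ∀ᶠ i in l, ∀ᵐ x ∂μ, ‖F i x - f x‖ₑ ^ p.toReal ≤ ‖2 * g x‖ₑ ^ p.toReal := by
      filter_upwards [h_bound] with i hi
      filter_upwards [hi, hf_bound] with x hFx hfx
      refine ENNReal.rpow_le_rpow (enorm_le_iff_norm_le.mpr ?_) hq.le
      calc ‖F i x - f x‖ ≤ ‖F i x‖ + ‖f x‖ := norm_sub_le _ _
        _ ≤ 2 * g x := by linarith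
        _ ≤ ‖2 * g x‖ := Real.le_norm_self _
    simpa using tendsto_lintegral_filter_of_dominated_convergence' _
      (hF_meas.mono fun i hi => (hi.sub hf_meas).enorm.pow_const _) h_dom h_fin h_lim'
  have h_root : Tendsto (fun s : ℝ≥0∞ => s ^ (1 / p.toReal)) (𝓝 0) (𝓝 0) := by
    simpa [ENNReal.zero_rpow_of_pos (inv_pos.mpr hq)] using
      (ENNReal.continuous_rpow_const (y := 1 / p.toReal)).tendsto 0
  refine (h_root.comp h_int).congr fun i => ?_
  simp [eLpNorm_eq_lintegral_rpow_enorm_toReal hp0 hp]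
end

/-- **Directional differentiability of the positive-part (Nemytskii max) operator on `L²(μ)`.**
For `z, h ∈ L²(μ)` the quotients `(P(z+τh) − P(z))/τ`, where `P v = v ⊔ 0`, converge in
`L²(μ)`-norm as `τ ↓ 0` to the element `D(z;h)` given a.e. by `h` on `{z > 0}`,
`max(h,0)` on `{z = 0}` and `0` on `{z < 0}`. -/
theorem posPart_directionally_differentiable
    {α : Type*} [MeasurableSpace α] (μ : Measure α)
    (z h : Lp ℝ 2 μ) :
    ∃ D : Lp ℝ 2 μ,
      ((D : α → ℝ) =ᵐ[μ] fun x =>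
        if 0 < (z : α → ℝ) x then (h : α → ℝ) x
        else if (z : α → ℝ) x = 0 then max ((h : α → ℝ) x) 0
        else 0) ∧
      Tendsto (fun τ : ℝ => τ⁻¹ • (((z + τ • h) ⊔ 0) - (z ⊔ 0)))
        (nhdsWithin 0 (Ioi 0)) (nhds D) := by
  have hd : MemLp (fun x => posPartDirDeriv (z x) (h x)) 2 μ :=
    memLp_posPartDirDeriv (Lp.aestronglyMeasurable z) (Lp.memLp h)
  refine ⟨hd.toLp _, hd.coeFn_toLp, ?_⟩
  rw [Lp.tendsto_Lp_iff_tendsto_eLpNorm']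
  refine (tendsto_eLpNorm_sub_of_dominated ENNReal.ofNat_ne_top
    (Eventually.of_forall fun τ => by fun_prop) hd.1 (Lp.memLp h).norm
    (Eventually.of_forall fun τ => ae_of_all _ fun x => abs_posPart_slope_le _ _ τ)
    (ae_of_all _ fun x => abs_posPartDirDeriv_le _ _)
    (ae_of_all _ fun x => tendsto_posPart_slope _ _)).congr fun τ => eLpNorm_congr_ae ?_
  filter_upwards [coeFn_posPart_slope z h τ, hd.coeFn_toLp] with x h1 h2
  simp only [Pi.sub_apply, h1, h2]
end

section
/- In the setting of the abstract state equation, there exists a constant C > 0, depending only on ϵ, T, L_f, L_𝓗 and the operator norm of B, with the following property: if ℓ₁, ℓ₂ : (0,T) → F are strongly measurable with ∫₀ᵀ ‖ℓᵢ(s)‖²_F ds < ∞, and q₁, q₂ : [0,T] → E are the corresponding continuous solutions of the state equation, then ‖q₁(t) − q₂(t)‖_E ≤ C ∫₀ᵗ ‖ℓ₁(s) − ℓ₂(s)‖_F ds for all t ∈ [0,T]. -/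
/-!
The positive part is `1`-Lipschitz in a Banach lattice and the Nemytskii operator of an
`Lf`-Lipschitz `f` is `Lf`-Lipschitz on `L²`, so the integrands of two solutions differ in norm by
at most `M (‖q₁ s - q₂ s‖ + ‖ℓ₁ s - ℓ₂ s‖) + Lf LH ∫₀ˢ ‖q₁ - q₂‖`. Integrating over `(0, t]`
gives `‖q₁ t - q₂ t‖ ≤ ϵ⁻¹ M ∫₀ᵗ ‖ℓ₁ - ℓ₂‖ + K ∫₀ᵗ ‖q₁ - q₂‖` with `K = ϵ⁻¹ (M + Lf LH T)`, and
Grönwall's inequality in integral form, with the nondecreasing forcing term `ϵ⁻¹ M ∫₀ᵗ ‖ℓ₁ - ℓ₂‖`,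
yields the claim with `C = ϵ⁻¹ M e^{KT} + 1`.
-/

open MeasureTheory Filter Set Topology

theorem add_mul_gronwallBound_zero (K c x : ℝ) :
    c + K * gronwallBound 0 K c x = c * Real.exp (K * x) := by
  by_cases hK : K = 0
  · simp [hK, gronwallBound_K0]
  · rw [gronwallBound_of_K_ne_0 hK]
    field_simp
    ring

theorem hasDerivWithinAt_setIntegral_Ioc {E : Type*} [NormedAddCommGroup E] [NormedSpace ℝ E]
    [CompleteSpace E] {φ : ℝ → E} {a b x : ℝ} (hφ : ContinuousOn φ (Icc a b)) (hx : x ∈ Ico a b) :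
    HasDerivWithinAt (fun t => ∫ s in Ioc a t, φ s) (φ x) (Ici x) x := by
  have hIoc : Ioc x b ∈ 𝓝[>] x := Ioc_mem_nhdsGT hx.2
  have hsub : Ioc x b ⊆ Icc a b := fun y hy => ⟨hx.1.trans hy.1.le, hy.2⟩
  have hint : IntervalIntegrable φ volume a x :=
    (hφ.mono (Icc_subset_Icc_right hx.2.le)).intervalIntegrable_of_Icc hx.1
  have hmeas : StronglyMeasurableAtFilter φ (𝓝[>] x) volume :=
    ⟨Ioc x b, hIoc, (hφ.mono hsub).aestronglyMeasurable measurableSet_Ioc⟩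
  have hcont : ContinuousWithinAt φ (Ioi x) x :=
    (hφ x (Ico_subset_Icc_self hx)).mono_of_mem_nhdsWithin (mem_of_superset hIoc hsub)
  refine (intervalIntegral.integral_hasDerivWithinAt_right hint hmeas hcont).congr
    (fun y hy => (intervalIntegral.integral_of_le (hx.1.trans hy)).symm)
    (intervalIntegral.integral_of_le hx.1).symm

theorem monotoneOn_setIntegral_Ioc {f : ℝ → ℝ} {a b : ℝ} (hf : IntegrableOn f (Ioc a b))
    (hf₀ : ∀ s, 0 ≤ f s) : MonotoneOn (fun t => ∫ s in Ioc a t, f s) (Iic b) :=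
  fun _ _ _ ht hst => setIntegral_mono_set (hf.mono_set (Ioc_subset_Ioc_right ht))
    (Eventually.of_forall fun x => hf₀ x) (Ioc_subset_Ioc_right hst).eventuallyLE

theorem le_mul_exp_of_le_add_mul_integral {φ : ℝ → ℝ} {a b c K : ℝ}
    (hφ : ContinuousOn φ (Icc a b)) (hK : 0 ≤ K)
    (h : ∀ t ∈ Icc a b, φ t ≤ c + K * ∫ s in Ioc a t, φ s) :
    ∀ t ∈ Icc a b, φ t ≤ c * Real.exp (K * (t - a)) := by
  set u : ℝ → ℝ := fun t => ∫ s in Ioc a t, φ s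
  have hu : ∀ t ∈ Icc a b, u t ≤ gronwallBound 0 K c (t - a) :=
    le_gronwallBound_of_liminf_deriv_right_le
      (intervalIntegral.continuousOn_primitive (hφ.integrableOn_compact isCompact_Icc))
      (fun x hx _ hr => (hasDerivWithinAt_setIntegral_Ioc hφ hx).liminf_right_slope_le hr)
      (by simp [u]) (fun x hx => by linarith [h x (Ico_subset_Icc_self hx)])
  intro t ht
  calc φ t ≤ c + K * u t := h t ht
    _ ≤ c + K * gronwallBound 0 K c (t - a) := by gcongr; exact hu t ht
    _ = c * Real.exp (K * (t - a)) := add_mul_gronwallBound_zero K c (t - a)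

theorem le_mul_exp_of_le_add_mul_integral_of_monotoneOn {φ c : ℝ → ℝ} {a b K : ℝ}
    (hφ : ContinuousOn φ (Icc a b)) (hK : 0 ≤ K) (hc : MonotoneOn c (Icc a b))
    (h : ∀ t ∈ Icc a b, φ t ≤ c t + K * ∫ s in Ioc a t, φ s) :
    ∀ t ∈ Icc a b, φ t ≤ c t * Real.exp (K * (t - a)) := fun t ht =>
  le_mul_exp_of_le_add_mul_integral (hφ.mono (Icc_subset_Icc_right ht.2)) hK
    (fun s hs => (h s ⟨hs.1, hs.2.trans ht.2⟩).trans <| by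
      gcongr
      exact hc ⟨hs.1, hs.2.trans ht.2⟩ ht hs.2)
    t ⟨ht.1, le_rfl⟩

theorem MeasureTheory.Lp.norm_sub_le_of_ae_eq_comp {α E E' : Type*} [MeasurableSpace α]
    {μ : Measure α} {p : ENNReal} [NormedAddCommGroup E] [NormedAddCommGroup E']
    {f : E → E'} {L : ℝ} (hf : ∀ x y, ‖f x - f y‖ ≤ L * ‖x - y‖)
    {fE : Lp E p μ → Lp E' p μ} (hfE : ∀ v : Lp E p μ, fE v =ᵐ[μ] fun x => f (v x))
    (v w : Lp E p μ) : ‖fE v - fE w‖ ≤ L * ‖v - w‖ := by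
  refine Lp.norm_le_mul_norm_of_ae_le_mul ?_
  filter_upwards [Lp.coeFn_sub (fE v) (fE w), Lp.coeFn_sub v w, hfE v, hfE w]
    with x hfvw hvw hfv hfw
  rw [hfvw, hvw, Pi.sub_apply, Pi.sub_apply, hfv, hfw]
  exact hf _ _

theorem ContinuousLinearMap.norm_apply_mk_le {E F G : Type*} [NormedAddCommGroup E]
    [NormedSpace ℝ E] [NormedAddCommGroup F] [NormedSpace ℝ F] [NormedAddCommGroup G]
    [NormedSpace ℝ G] (B : E × F →L[ℝ] G) (x : E) (y : F) : ‖B (x, y)‖ ≤ ‖B‖ * (‖x‖ + ‖y‖) :=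
  (B.le_opNorm _).trans <| by
    gcongr
    exact max_le (le_add_of_nonneg_right (norm_nonneg _)) (le_add_of_nonneg_left (norm_nonneg _))

section StateEquation

variable {E F : Type*} [NormedAddCommGroup E] [Lattice E] [HasSolidNorm E] [IsOrderedAddMonoid E]
  [NormedSpace ℝ E] [NormedAddCommGroup F] [NormedSpace ℝ F]
  (B : E × F →L[ℝ] E) {g : E → E} {L : ℝ}

theorem norm_posPart_sub_posPart_le (hg : ∀ v w, ‖g v - g w‖ ≤ L * ‖v - w‖)
    (x₁ x₂ : E) (y₁ y₂ : F) (z₁ z₂ : E) :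
    ‖(B (x₁, y₁) - g z₁) ⊔ 0 - (B (x₂, y₂) - g z₂) ⊔ 0‖
      ≤ ‖B‖ * (‖x₁ - x₂‖ + ‖y₁ - y₂‖) + L * ‖z₁ - z₂‖ :=
  calc _ ≤ ‖(B (x₁, y₁) - B (x₂, y₂)) - (g z₁ - g z₂)‖ := by
        rw [sub_sub_sub_comm]; exact norm_sup_sub_sup_le_norm _ _ _
    _ ≤ ‖B (x₁ - x₂, y₁ - y₂)‖ + ‖g z₁ - g z₂‖ := by
        rw [← map_sub, Prod.mk_sub_mk]; exact norm_sub_le _ _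
    _ ≤ _ := add_le_add (B.norm_apply_mk_le _ _) (hg z₁ z₂)

theorem integrable_posPart_apply_mk_sub {X : Type*} [MeasurableSpace X] {ν : Measure X}
    {x : X → E} {y : X → F} {z : X → E} (hx : Integrable x ν) (hy : Integrable y ν)
    (hz : Integrable z ν) : Integrable (fun s => (B (x s, y s) - z s) ⊔ 0) ν :=
  ((B.integrable_comp (hx.prodMk hy)).sub hz).sup (integrable_zero _ _ _)

variable {H : (ℝ → E) → ℝ → E} {ϵ T M LH : ℝ}

theorem norm_posPart_sub_posPart_le_of_volterra (hL : 0 ≤ L) (hB : ‖B‖ ≤ M)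
    (hg : ∀ v w, ‖g v - g w‖ ≤ L * ‖v - w‖)
    (hH : ∀ q₁ q₂ : ℝ → E, ContinuousOn q₁ (Icc 0 T) → ContinuousOn q₂ (Icc 0 T) →
      ∀ t ∈ Icc (0:ℝ) T, ‖H q₁ t - H q₂ t‖ ≤ LH * ∫ s in Ioc (0:ℝ) t, ‖q₁ s - q₂ s‖)
    {ℓ₁ ℓ₂ : ℝ → F} {q₁ q₂ : ℝ → E} (hq₁c : ContinuousOn q₁ (Icc 0 T))
    (hq₂c : ContinuousOn q₂ (Icc 0 T)) {s : ℝ} (hs : s ∈ Icc 0 T) :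
    ‖(B (q₁ s, ℓ₁ s) - g (H q₁ s)) ⊔ 0 - (B (q₂ s, ℓ₂ s) - g (H q₂ s)) ⊔ 0‖
      ≤ M * ‖ℓ₁ s - ℓ₂ s‖ + M * ‖q₁ s - q₂ s‖
        + L * LH * ∫ r in Ioc 0 s, ‖q₁ r - q₂ r‖ :=
  calc _ ≤ ‖B‖ * (‖q₁ s - q₂ s‖ + ‖ℓ₁ s - ℓ₂ s‖) + L * ‖H q₁ s - H q₂ s‖ :=
        norm_posPart_sub_posPart_le B hg _ _ _ _ _ _
    _ ≤ M * (‖q₁ s - q₂ s‖ + ‖ℓ₁ s - ℓ₂ s‖) + L * (LH * ∫ r in Ioc 0 s, ‖q₁ r - q₂ r‖) := by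
        gcongr
        exact hH q₁ q₂ hq₁c hq₂c s hs
    _ = _ := by ring

theorem integrableOn_posPart_apply_mk_sub_comp (hg : Continuous g)
    (hH : ∀ q, ContinuousOn q (Icc 0 T) → ContinuousOn (H q) (Icc 0 T))
    {ℓ : ℝ → F} {q : ℝ → E} (hℓ : IntegrableOn ℓ (Ioc 0 T)) (hq : ContinuousOn q (Icc 0 T)) :
    IntegrableOn (fun s => (B (q s, ℓ s) - g (H q s)) ⊔ 0) (Ioc 0 T) :=
  integrable_posPart_apply_mk_sub B (hq.integrableOn_Icc.mono_set Ioc_subset_Icc_self) hℓ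
    ((hg.comp_continuousOn (hH q hq)).integrableOn_Icc.mono_set Ioc_subset_Icc_self)

theorem norm_sub_le_of_state_eq (hϵ : 0 < ϵ) (hL : 0 ≤ L) (hLH : 0 ≤ LH) (hB : ‖B‖ ≤ M)
    (hg : ∀ v w, ‖g v - g w‖ ≤ L * ‖v - w‖)
    (hHcont : ∀ q, ContinuousOn q (Icc 0 T) → ContinuousOn (H q) (Icc 0 T))
    (hH : ∀ q₁ q₂ : ℝ → E, ContinuousOn q₁ (Icc 0 T) → ContinuousOn q₂ (Icc 0 T) →
      ∀ t ∈ Icc (0:ℝ) T, ‖H q₁ t - H q₂ t‖ ≤ LH * ∫ s in Ioc (0:ℝ) t, ‖q₁ s - q₂ s‖)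
    {ℓ₁ ℓ₂ : ℝ → F} (hℓ₁ : IntegrableOn ℓ₁ (Ioc 0 T)) (hℓ₂ : IntegrableOn ℓ₂ (Ioc 0 T))
    {q₁ q₂ : ℝ → E} (hq₁c : ContinuousOn q₁ (Icc 0 T)) (hq₂c : ContinuousOn q₂ (Icc 0 T))
    (hq₁ : ∀ t ∈ Icc (0:ℝ) T,
      q₁ t = ϵ⁻¹ • ∫ s in Ioc (0:ℝ) t, (B (q₁ s, ℓ₁ s) - g (H q₁ s)) ⊔ 0)
    (hq₂ : ∀ t ∈ Icc (0:ℝ) T,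
      q₂ t = ϵ⁻¹ • ∫ s in Ioc (0:ℝ) t, (B (q₂ s, ℓ₂ s) - g (H q₂ s)) ⊔ 0)
    (t : ℝ) (ht : t ∈ Icc 0 T) :
    ‖q₁ t - q₂ t‖ ≤ ϵ⁻¹ * M * (∫ s in Ioc 0 t, ‖ℓ₁ s - ℓ₂ s‖)
      + ϵ⁻¹ * (M + L * LH * T) * ∫ s in Ioc 0 t, ‖q₁ s - q₂ s‖ := by
  set φ : ℝ → ℝ := fun s => ‖q₁ s - q₂ s‖
  set u : ℝ → ℝ := fun t => ∫ s in Ioc 0 t, φ s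
  have hsub : Ioc 0 t ⊆ Ioc 0 T := Ioc_subset_Ioc_right ht.2
  have hφ : IntegrableOn φ (Ioc 0 T) :=
    (hq₁c.sub hq₂c).norm.integrableOn_Icc.mono_set Ioc_subset_Icc_self
  have hφt : IntegrableOn φ (Ioc 0 t) := hφ.mono_set hsub
  have hΔℓ : IntegrableOn (fun s => ‖ℓ₁ s - ℓ₂ s‖) (Ioc 0 t) :=
    IntegrableOn.mono_set (hℓ₁.sub hℓ₂).norm hsub
  have hvol : volume (Ioc (0:ℝ) t) ≠ ⊤ := by simp
  have hg_cont : Continuous g :=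
    (LipschitzWith.of_dist_le_mul (K := ⟨L, hL⟩) fun v w => by
      rw [dist_eq_norm, dist_eq_norm]; exact hg v w).continuous
  have hP₁ := (integrableOn_posPart_apply_mk_sub_comp B hg_cont hHcont hℓ₁ hq₁c).mono_set hsub
  have hP₂ := (integrableOn_posPart_apply_mk_sub_comp B hg_cont hHcont hℓ₂ hq₂c).mono_set hsub
  have hpt : ∀ s ∈ Ioc 0 t,
      ‖(B (q₁ s, ℓ₁ s) - g (H q₁ s)) ⊔ 0 - (B (q₂ s, ℓ₂ s) - g (H q₂ s)) ⊔ 0‖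
        ≤ M * ‖ℓ₁ s - ℓ₂ s‖ + M * φ s + L * LH * u t := fun s hs => by
    have hsT : s ∈ Icc 0 T := ⟨hs.1.le, hs.2.trans ht.2⟩
    refine (norm_posPart_sub_posPart_le_of_volterra B hL hB hg hH hq₁c hq₂c hsT).trans ?_
    gcongr
    exact monotoneOn_setIntegral_Ioc hφ (fun _ => norm_nonneg _) hsT.2 ht.2 hs.2
  calc ‖q₁ t - q₂ t‖
      = ϵ⁻¹ * ‖∫ s in Ioc 0 t,
          ((B (q₁ s, ℓ₁ s) - g (H q₁ s)) ⊔ 0 - (B (q₂ s, ℓ₂ s) - g (H q₂ s)) ⊔ 0)‖ := by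
        rw [hq₁ t ht, hq₂ t ht, ← smul_sub, ← integral_sub hP₁ hP₂, norm_smul,
          Real.norm_of_nonneg (inv_nonneg.2 hϵ.le)]
    _ ≤ ϵ⁻¹ * ∫ s in Ioc 0 t, (M * ‖ℓ₁ s - ℓ₂ s‖ + M * φ s + L * LH * u t) := by
        gcongr
        exact norm_integral_le_of_norm_le
          (((hΔℓ.const_mul M).add (hφt.const_mul M)).add (integrableOn_const hvol))
          (ae_restrict_of_forall_mem measurableSet_Ioc hpt)
    _ = ϵ⁻¹ * (M * (∫ s in Ioc 0 t, ‖ℓ₁ s - ℓ₂ s‖) + M * u t + L * LH * u t * t) := by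
        rw [integral_add (by exact (hΔℓ.const_mul M).add (hφt.const_mul M))
            (by exact integrableOn_const hvol),
          integral_add (hΔℓ.const_mul M) (hφt.const_mul M), integral_const_mul,
          integral_const_mul, setIntegral_const, smul_eq_mul, Real.volume_real_Ioc_of_le ht.1,
          sub_zero]
        ring
    _ ≤ ϵ⁻¹ * (M * (∫ s in Ioc 0 t, ‖ℓ₁ s - ℓ₂ s‖) + M * u t + L * LH * u t * T) := by
        gcongr
        exact ht.2
    _ = _ := by ring

end StateEquation

theorem control_to_state_lipschitz_general
    {α : Type*} [MeasurableSpace α] (μ : Measure α)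
    {F : Type*} [NormedAddCommGroup F] [InnerProductSpace ℝ F]
    (ϵ T Lf LH M : ℝ) (hϵ : 0 < ϵ) (hT : 0 < T) (hLf : 0 ≤ Lf) (hLH : 0 ≤ LH) (hM : 0 ≤ M) :
    ∃ C > (0:ℝ),
      ∀ B : Lp ℝ 2 μ × F →L[ℝ] Lp ℝ 2 μ, ‖B‖ ≤ M →
      ∀ f : ℝ → ℝ, (∀ x y : ℝ, |f x - f y| ≤ Lf * |x - y|) →
      ∀ fE : Lp ℝ 2 μ → Lp ℝ 2 μ,
        (∀ v : Lp ℝ 2 μ, (fE v : α → ℝ) =ᵐ[μ] fun x => f ((v : α → ℝ) x)) →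
      ∀ H : (ℝ → Lp ℝ 2 μ) → (ℝ → Lp ℝ 2 μ),
        (∀ q : ℝ → Lp ℝ 2 μ, ContinuousOn q (Icc 0 T) → ContinuousOn (H q) (Icc 0 T)) →
        (∀ q₁ q₂ : ℝ → Lp ℝ 2 μ, ContinuousOn q₁ (Icc 0 T) → ContinuousOn q₂ (Icc 0 T) →
          ∀ t ∈ Icc (0:ℝ) T,
            ‖H q₁ t - H q₂ t‖ ≤ LH * ∫ s in Ioc (0:ℝ) t, ‖q₁ s - q₂ s‖) →
      ∀ ℓ₁ ℓ₂ : ℝ → F,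
        MemLp ℓ₁ 2 (volume.restrict (Ioc (0:ℝ) T)) →
        MemLp ℓ₂ 2 (volume.restrict (Ioc (0:ℝ) T)) →
      ∀ q₁ q₂ : ℝ → Lp ℝ 2 μ,
        (ContinuousOn q₁ (Icc 0 T) ∧
          ∀ t ∈ Icc (0:ℝ) T,
            q₁ t = ϵ⁻¹ • ∫ s in Ioc (0:ℝ) t, ((B (q₁ s, ℓ₁ s) - fE (H q₁ s)) ⊔ 0)) →
        (ContinuousOn q₂ (Icc 0 T) ∧
          ∀ t ∈ Icc (0:ℝ) T,
            q₂ t = ϵ⁻¹ • ∫ s in Ioc (0:ℝ) t, ((B (q₂ s, ℓ₂ s) - fE (H q₂ s)) ⊔ 0)) →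
      ∀ t ∈ Icc (0:ℝ) T,
        ‖q₁ t - q₂ t‖ ≤ C * ∫ s in Ioc (0:ℝ) t, ‖ℓ₁ s - ℓ₂ s‖ := by
  set K := ϵ⁻¹ * (M + Lf * LH * T)
  have hϵM : 0 ≤ ϵ⁻¹ * M := mul_nonneg (inv_nonneg.2 hϵ.le) hM
  have hK : 0 ≤ K :=
    mul_nonneg (inv_nonneg.2 hϵ.le) (add_nonneg hM (mul_nonneg (mul_nonneg hLf hLH) hT.le))
  refine ⟨ϵ⁻¹ * M * Real.exp (K * T) + 1,
    add_pos_of_nonneg_of_pos (mul_nonneg hϵM (Real.exp_pos _).le) one_pos, ?_⟩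
  intro B hB f hf fE hfE H hHcont hH ℓ₁ ℓ₂ hℓ₁ hℓ₂ q₁ q₂ ⟨hq₁c, hq₁⟩ ⟨hq₂c, hq₂⟩ t ht
  have hℓ₁i := hℓ₁.integrable one_le_two
  have hℓ₂i := hℓ₂.integrable one_le_two
  set G := fun t => ∫ s in Ioc 0 t, ‖ℓ₁ s - ℓ₂ s‖
  have hG : MonotoneOn (fun t => ϵ⁻¹ * M * G t) (Icc 0 T) := fun r hr s hs hrs =>
    mul_le_mul_of_nonneg_left
      (monotoneOn_setIntegral_Ioc (hℓ₁i.sub hℓ₂i).norm (fun _ => norm_nonneg _) hr.2 hs.2 hrs) hϵM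
  have hfE_lip := Lp.norm_sub_le_of_ae_eq_comp
    (fun x y => by simpa only [Real.norm_eq_abs] using hf x y) hfE
  have hG₀ : 0 ≤ G t := setIntegral_nonneg measurableSet_Ioc fun _ _ => norm_nonneg _
  calc ‖q₁ t - q₂ t‖ ≤ ϵ⁻¹ * M * G t * Real.exp (K * (t - 0)) :=
        le_mul_exp_of_le_add_mul_integral_of_monotoneOn (hq₁c.sub hq₂c).norm hK hG
          (norm_sub_le_of_state_eq B hϵ hLf hLH hB hfE_lip hHcont hH hℓ₁i hℓ₂i hq₁c hq₂c hq₁ hq₂)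
          t ht
    _ ≤ ϵ⁻¹ * M * G t * Real.exp (K * T) := by
        rw [sub_zero]
        gcongr
        exact ht.2
    _ ≤ (ϵ⁻¹ * M * Real.exp (K * T) + 1) * G t := by linarith

/-- **Lipschitz continuity of the control-to-state map of the abstract state equation.**
There is a constant `C > 0`, depending only on `ϵ`, `T`, `Lf`, `LH` and a bound `M` on the
operator norm of `B`, such that any two solutions `q₁, q₂` of the state equation with data
`ℓ₁, ℓ₂` satisfy `‖q₁(t) − q₂(t)‖ ≤ C ∫₀ᵗ ‖ℓ₁(s) − ℓ₂(s)‖ ds` for all `t ∈ [0,T]`. -/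
theorem control_to_state_lipschitz
    {α : Type*} [MeasurableSpace α] (μ : Measure α) [IsFiniteMeasure μ]
    {F : Type*} [NormedAddCommGroup F] [InnerProductSpace ℝ F] [CompleteSpace F]
    (ϵ T Lf LH M : ℝ) (hϵ : 0 < ϵ) (hT : 0 < T) (hLf : 0 ≤ Lf) (hLH : 0 ≤ LH) (hM : 0 ≤ M) :
    ∃ C > (0:ℝ),
      ∀ B : Lp ℝ 2 μ × F →L[ℝ] Lp ℝ 2 μ, ‖B‖ ≤ M →
      ∀ f : ℝ → ℝ, (∀ x y : ℝ, |f x - f y| ≤ Lf * |x - y|) →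
      ∀ fE : Lp ℝ 2 μ → Lp ℝ 2 μ,
        (∀ v : Lp ℝ 2 μ, (fE v : α → ℝ) =ᵐ[μ] fun x => f ((v : α → ℝ) x)) →
      ∀ H : (ℝ → Lp ℝ 2 μ) → (ℝ → Lp ℝ 2 μ),
        (∀ q : ℝ → Lp ℝ 2 μ, ContinuousOn q (Icc 0 T) → ContinuousOn (H q) (Icc 0 T)) →
        (∀ q₁ q₂ : ℝ → Lp ℝ 2 μ, ContinuousOn q₁ (Icc 0 T) → ContinuousOn q₂ (Icc 0 T) →
          ∀ t ∈ Icc (0:ℝ) T,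
            ‖H q₁ t - H q₂ t‖ ≤ LH * ∫ s in Ioc (0:ℝ) t, ‖q₁ s - q₂ s‖) →
      ∀ ℓ₁ ℓ₂ : ℝ → F,
        MemLp ℓ₁ 2 (volume.restrict (Ioc (0:ℝ) T)) →
        MemLp ℓ₂ 2 (volume.restrict (Ioc (0:ℝ) T)) →
      ∀ q₁ q₂ : ℝ → Lp ℝ 2 μ,
        (ContinuousOn q₁ (Icc 0 T) ∧
          ∀ t ∈ Icc (0:ℝ) T,
            q₁ t = ϵ⁻¹ • ∫ s in Ioc (0:ℝ) t, ((B (q₁ s, ℓ₁ s) - fE (H q₁ s)) ⊔ 0)) →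
        (ContinuousOn q₂ (Icc 0 T) ∧
          ∀ t ∈ Icc (0:ℝ) T,
            q₂ t = ϵ⁻¹ • ∫ s in Ioc (0:ℝ) t, ((B (q₂ s, ℓ₂ s) - fE (H q₂ s)) ⊔ 0)) →
      ∀ t ∈ Icc (0:ℝ) T,
        ‖q₁ t - q₂ t‖ ≤ C * ∫ s in Ioc (0:ℝ) t, ‖ℓ₁ s - ℓ₂ s‖ :=
  control_to_state_lipschitz_general μ ϵ T Lf LH M hϵ hT hLf hLH hM
end
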